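/- Any non-signaling strategy for the CHSH_n game satisfying Pr[X = 0 | A = 0] = 1 is a convex combination of deterministic classical strategies, i.e., of non-signaling strategies in which Pr[X = 0 | A = a] and Pr[Y = 0 | B = b] are each 0 or 1 for every a, b. -/

import Mathlib

/-!
The question pairs of CHSH_n form the cycle `X₀ – Y₁ – X₁ – Y₂ – ⋯ – X_{n-1} – Y₀ – X₀`.
Dropping the edge `(X₀, Y₀)` leaves a path, and the pair distributions along a path can be
glued into one joint distribution of all `2n` answers by a Markov chain whose transitions are
the conditional distributions of `p`; non-signaling makes consecutive pairs agree on their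
shared answer, so every path edge gets the right distribution. A joint distribution of all
answers is a mixture of deterministic strategies. The missing edge comes for free: `X₀ = 0`
almost surely, so the pair `(X₀, Y₀)` is distributed as `δ₀ ⊗ law(Y₀)`, which is `p(·,·|0,0)`.
-/

open Finset

theorem sum_fun_eq_sum_sum_snoc {α β : Type*} [Fintype α] [AddCommMonoid β] {m : ℕ}
    (F : (Fin (m + 1) → α) → β) :
    ∑ f, F f = ∑ g : Fin m → α, ∑ v, F (Fin.snoc g v) := by
  rw [← (Fin.snocEquiv fun _ => α).sum_comp, Fintype.sum_prod_type, Finset.sum_comm]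
  rfl

namespace MarkovChain

variable {α : Type*} (μ : α → ℝ) (K : ℕ → α → α → ℝ)

noncomputable def pathWeight : (m : ℕ) → (Fin (m + 1) → α) → ℝ
  | 0, f => μ (f 0)
  | m + 1, f => pathWeight m (Fin.init f) * K m (Fin.init f (Fin.last m)) (f (Fin.last (m + 1)))

@[simp]
theorem pathWeight_snoc (m : ℕ) (g : Fin (m + 1) → α) (v : α) :
    pathWeight μ K (m + 1) (Fin.snoc g v) = pathWeight μ K m g * K m (g (Fin.last m)) v := by
  simp [pathWeight, Fin.init_snoc]

theorem pathWeight_nonneg (hμ : ∀ u, 0 ≤ μ u) (hK : ∀ i u v, 0 ≤ K i u v) :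
    ∀ m (f : Fin (m + 1) → α), 0 ≤ pathWeight μ K m f
  | 0, _ => hμ _
  | m + 1, _ => mul_nonneg (pathWeight_nonneg hμ hK m _) (hK _ _ _)

theorem pathWeight_eq_zero_of_initial_eq_zero :
    ∀ m (f : Fin (m + 1) → α), μ (f 0) = 0 → pathWeight μ K m f = 0
  | 0, _, h => h
  | m + 1, f, h => by
    rw [pathWeight, pathWeight_eq_zero_of_initial_eq_zero m _ (by simpa [Fin.init] using h),
      zero_mul]

variable [Fintype α]

noncomputable def marginal : ℕ → α → ℝ
  | 0 => μ
  | j + 1 => fun v => ∑ u, marginal j u * K j u v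

variable {K}

theorem sum_pathWeight_mul_init (hK : ∀ i u, ∑ v, K i u v = 1) (m : ℕ)
    (G : (Fin (m + 1) → α) → ℝ) :
    ∑ f : Fin (m + 2) → α, pathWeight μ K (m + 1) f * G (Fin.init f) =
      ∑ g, pathWeight μ K m g * G g := by
  rw [sum_fun_eq_sum_sum_snoc]
  refine sum_congr rfl fun g _ => ?_
  simp [mul_right_comm _ _ (G g), ← mul_sum, hK]

theorem sum_pathWeight_mul_apply (hK : ∀ i u, ∑ v, K i u v = 1) :
    ∀ m (i : Fin (m + 1)) (h : α → ℝ),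
      ∑ f, pathWeight μ K m f * h (f i) = ∑ u, marginal μ K i u * h u
  | 0, i, h => by
    rw [Fin.fin_one_eq_zero i, sum_fun_eq_sum_sum_snoc]
    simp [pathWeight, marginal, Fin.snoc]
  | m + 1, i, h => by
    induction i using Fin.lastCases with
    | last =>
      rw [sum_fun_eq_sum_sum_snoc]
      simp only [pathWeight_snoc, Fin.snoc_last, Fin.val_last, marginal, mul_assoc, ← mul_sum]
      rw [sum_pathWeight_mul_apply hK m (Fin.last m) fun u => ∑ v, K m u v * h v, Fin.val_last]
      simp only [mul_sum, sum_mul, mul_assoc]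
      exact sum_comm
    | cast i =>
      have := sum_pathWeight_mul_init μ hK m (fun g => h (g i))
      simp only [Fin.init] at this
      rw [this, sum_pathWeight_mul_apply hK m i h, Fin.val_castSucc]

theorem sum_pathWeight_mul_apply_apply (hK : ∀ i u, ∑ v, K i u v = 1) :
    ∀ m (i : Fin m) (g : α → α → ℝ),
      ∑ f : Fin (m + 1) → α, pathWeight μ K m f * g (f i.castSucc) (f i.succ) =
        ∑ u, ∑ v, marginal μ K i u * K i u v * g u v
  | 0, i, _ => i.elim0
  | m + 1, i, g => by
    induction i using Fin.lastCases with
    | last =>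
      rw [sum_fun_eq_sum_sum_snoc]
      simp only [pathWeight_snoc, Fin.snoc_last, Fin.succ_last, Fin.snoc_castSucc, mul_assoc,
        ← mul_sum]
      rw [sum_pathWeight_mul_apply μ hK m (Fin.last m) fun u => ∑ v, K m u v * g u v,
        Fin.val_last]
    | cast i =>
      have := sum_pathWeight_mul_init μ hK m (fun f => g (f i.castSucc) (f i.succ))
      simp only [Fin.init] at this
      rw [Fin.succ_castSucc, this, sum_pathWeight_mul_apply_apply hK m i g, Fin.val_castSucc]

theorem sum_pathWeight (hK : ∀ i u, ∑ v, K i u v = 1) (m : ℕ) :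
    ∑ f : Fin (m + 1) → α, pathWeight μ K m f = ∑ u, μ u := by
  simpa [marginal] using sum_pathWeight_mul_apply μ hK m 0 fun _ => 1

end MarkovChain

section CondKernel

variable {α β : Type*} [Fintype β]

/-- Rows of `π` with total mass zero get the uniform distribution. -/
noncomputable def condKernel (π : α → β → ℝ) (a : α) (b : β) : ℝ :=
  if ∑ b', π a b' = 0 then (Fintype.card β : ℝ)⁻¹ else π a b / ∑ b', π a b'

variable {π : α → β → ℝ}

theorem condKernel_nonneg (hπ : ∀ a b, 0 ≤ π a b) (a : α) (b : β) :
    0 ≤ condKernel π a b := by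
  unfold condKernel
  split_ifs
  · positivity
  · exact div_nonneg (hπ a b) (sum_nonneg fun b' _ => hπ a b')

theorem sum_condKernel [Nonempty β] (a : α) : ∑ b, condKernel π a b = 1 := by
  unfold condKernel
  split_ifs with h
  · simp
  · rw [← sum_div, div_self h]

theorem sum_mul_condKernel {a : α} (hπ : ∀ b, 0 ≤ π a b) (b : β) :
    (∑ b', π a b') * condKernel π a b = π a b := by
  unfold condKernel
  split_ifs with h
  · rw [h, zero_mul, (sum_eq_zero_iff_of_nonneg fun b' _ => hπ b').1 h b (mem_univ b)]
  · exact mul_div_cancel₀ _ h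

end CondKernel

namespace CHSH

open Fin.NatCast

variable {n : ℕ} [NeZero n] (p : Fin n → Fin n → Bool → Bool → ℝ)

/-- The chain's state at step `c` is `(X_c, Y_{c+1})`; a step draws `X_{c+1}` given `Y_{c+1}`
from `p(·,·|c+1,c+1)`, then `Y_{c+2}` given `X_{c+1}` from `p(·,·|c+1,c+2)`. -/
noncomputable def transition (c : Fin n) (s t : Bool × Bool) : ℝ :=
  condKernel (fun y x => p (c + 1) (c + 1) x y) s.2 t.1 *
    condKernel (p (c + 1) (c + 1 + 1)) t.1 t.2

def initial (s : Bool × Bool) : ℝ := p 0 (0 + 1) s.1 s.2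

noncomputable def weight (m : ℕ) : (Fin (m + 1) → Bool × Bool) → ℝ :=
  MarkovChain.pathWeight (initial p) (fun k => transition p k) m

theorem sum_transition (c : Fin n) (s : Bool × Bool) : ∑ t, transition p c s t = 1 := by
  simp only [transition, Fintype.sum_prod_type, ← mul_sum, sum_condKernel, mul_one]

variable {p}

theorem transition_nonneg (hnn : ∀ a b x y, (b = a ∨ b = a + 1) → 0 ≤ p a b x y)
    (c : Fin n) (s t : Bool × Bool) : 0 ≤ transition p c s t :=
  mul_nonneg (condKernel_nonneg (fun _ _ => hnn _ _ _ _ (.inl rfl)) _ _)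
    (condKernel_nonneg (fun _ _ => hnn _ _ _ _ (.inr rfl)) _ _)

theorem sum_transition_mul (c : Fin n) (s : Bool × Bool) (g : Bool → ℝ) :
    ∑ t, transition p c s t * g t.1 =
      ∑ x, condKernel (fun y x => p (c + 1) (c + 1) x y) s.2 x * g x := by
  simp only [transition, Fintype.sum_prod_type, mul_right_comm _ _ (g _), ← mul_sum,
    sum_condKernel, mul_one]

theorem weight_nonneg (hnn : ∀ a b x y, (b = a ∨ b = a + 1) → 0 ≤ p a b x y) (m : ℕ)
    (f : Fin (m + 1) → Bool × Bool) : 0 ≤ weight p m f :=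
  MarkovChain.pathWeight_nonneg _ _ (fun _ => hnn _ _ _ _ (.inr rfl))
    (fun _ _ _ => transition_nonneg hnn _ _ _) m f

theorem sum_weight
    (hsum : ∀ a b, (b = a ∨ b = a + 1) → ∑ x : Bool, ∑ y : Bool, p a b x y = 1) (m : ℕ) :
    ∑ f, weight p m f = 1 := by
  rw [weight, MarkovChain.sum_pathWeight _ (fun i u => sum_transition p i u),
    Fintype.sum_prod_type]
  exact hsum 0 (0 + 1) (.inr rfl)

section
variable (hnn : ∀ a b x y, (b = a ∨ b = a + 1) → 0 ≤ p a b x y)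
  (hnsA : ∀ a x, ∑ y : Bool, p a a x y = ∑ y : Bool, p a (a + 1) x y)
  (hnsB : ∀ b y, ∑ x : Bool, p b b x y = ∑ x : Bool, p (b - 1) b x y)
include hnn hnsB

theorem sum_mul_condKernel_transpose (c : Fin n) (y x : Bool) :
    (∑ x', p c (c + 1) x' y) * condKernel (fun y x => p (c + 1) (c + 1) x y) y x =
      p (c + 1) (c + 1) x y := by
  have hcol := hnsB (c + 1) y
  rw [add_sub_cancel_right] at hcol
  rw [← hcol]
  exact sum_mul_condKernel (π := fun y x => p (c + 1) (c + 1) x y)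
    (fun _ => hnn _ _ _ _ (.inl rfl)) x

include hnsA in
theorem sum_mul_transition (c : Fin n) (t : Bool × Bool) :
    ∑ s : Bool × Bool, p c (c + 1) s.1 s.2 * transition p c s t =
      p (c + 1) (c + 1 + 1) t.1 t.2 := by
  calc ∑ s : Bool × Bool, p c (c + 1) s.1 s.2 * transition p c s t
      = ∑ y, (∑ x', p c (c + 1) x' y) * condKernel (fun y x => p (c + 1) (c + 1) x y) y t.1 *
          condKernel (p (c + 1) (c + 1 + 1)) t.1 t.2 := by
        rw [Fintype.sum_prod_type, sum_comm]
        simp only [transition, sum_mul, mul_assoc]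
    _ = (∑ y, p (c + 1) (c + 1 + 1) t.1 y) * condKernel (p (c + 1) (c + 1 + 1)) t.1 t.2 := by
        simp only [sum_mul_condKernel_transpose hnn hnsB, ← sum_mul, hnsA]
    _ = p (c + 1) (c + 1 + 1) t.1 t.2 := sum_mul_condKernel (fun y => hnn _ _ _ _ (.inr rfl)) _

theorem sum_sum_mul_transition (c : Fin n) (h : Bool → Bool → ℝ) :
    ∑ s : Bool × Bool, ∑ t : Bool × Bool,
        p c (c + 1) s.1 s.2 * transition p c s t * h t.1 s.2 =
      ∑ x, ∑ y, p (c + 1) (c + 1) x y * h x y := by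
  calc _ = ∑ s : Bool × Bool, p c (c + 1) s.1 s.2 *
          ∑ x, condKernel (fun y x => p (c + 1) (c + 1) x y) s.2 x * h x s.2 := by
        refine sum_congr rfl fun s _ => ?_
        rw [← sum_transition_mul, mul_sum]
        simp only [mul_assoc]
    _ = ∑ y, ∑ x, (∑ x', p c (c + 1) x' y) *
          condKernel (fun y x => p (c + 1) (c + 1) x y) y x * h x y := by
        rw [Fintype.sum_prod_type, sum_comm]
        refine sum_congr rfl fun y _ => ?_
        simp only [← sum_mul, mul_assoc, ← mul_sum]
    _ = _ := by
        rw [sum_comm]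
        simp only [sum_mul_condKernel_transpose hnn hnsB]

include hnsA in
theorem marginal_eq (k : ℕ) (s : Bool × Bool) :
    MarkovChain.marginal (initial p) (fun k => transition p k) k s = p k (k + 1) s.1 s.2 := by
  induction k generalizing s with
  | zero => simp [MarkovChain.marginal, initial]
  | succ k ih =>
    simp only [MarkovChain.marginal, ih, Nat.cast_succ]
    exact sum_mul_transition hnn hnsA hnsB _ s

end

def detStrategy {ι : Type*} (X Y : ι → Bool) (a b : ι) (x y : Bool) : ℝ :=
  (if X a = x then 1 else 0) * (if Y b = y then 1 else 0)

def pathStrategy (f : Fin n → Bool × Bool) : Fin n → Fin n → Bool → Bool → ℝ :=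
  detStrategy (fun a => (f a).1) (fun b => (f (b - 1)).2)

section DetStrategy

variable {ι : Type*} (X Y : ι → Bool) (a b : ι)

theorem detStrategy_nonneg (x y : Bool) : 0 ≤ detStrategy X Y a b x y := by
  unfold detStrategy
  positivity

theorem sum_detStrategy_right (x : Bool) :
    ∑ y, detStrategy X Y a b x y = if X a = x then 1 else 0 := by
  simp [detStrategy]

theorem sum_detStrategy_left (y : Bool) :
    ∑ x, detStrategy X Y a b x y = if Y b = y then 1 else 0 := by
  simp [detStrategy]

theorem sum_sum_detStrategy : ∑ x, ∑ y, detStrategy X Y a b x y = 1 := by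
  simp only [sum_detStrategy_right, Fintype.sum_ite_eq]

end DetStrategy

section Decomposition

variable {m : ℕ} {p : Fin (m + 1) → Fin (m + 1) → Bool → Bool → ℝ}
  (hnn : ∀ a b x y, (b = a ∨ b = a + 1) → 0 ≤ p a b x y)
  (hsum : ∀ a b, (b = a ∨ b = a + 1) → ∑ x : Bool, ∑ y : Bool, p a b x y = 1)
  (hnsA : ∀ a x, ∑ y : Bool, p a a x y = ∑ y : Bool, p a (a + 1) x y)
  (hnsB : ∀ b y, ∑ x : Bool, p b b x y = ∑ x : Bool, p (b - 1) b x y)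
  (hfix : ∀ b : Fin (m + 1), (b = 0 ∨ b = 0 + 1) → ∑ y : Bool, p 0 b false y = 1)

include hnn hsum hfix in
theorem apply_zero_true_eq_zero {b : Fin (m + 1)} (hb : b = 0 ∨ b = 0 + 1) (y : Bool) :
    p 0 b true y = 0 := by
  have htrue : ∑ y, p 0 b true y = 0 := by
    have := hsum 0 b hb
    rw [Fintype.sum_bool, hfix b hb] at this
    linarith
  exact (sum_eq_zero_iff_of_nonneg fun y _ => hnn 0 b true y hb).1 htrue y (mem_univ y)

include hnn hnsA hnsB

theorem sum_weight_mul_detStrategy_add_one (a : Fin (m + 1)) (x y : Bool) :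
    ∑ f, weight p m f * pathStrategy f a (a + 1) x y =
      p a (a + 1) x y := by
  simp only [pathStrategy, detStrategy, add_sub_cancel_right]
  have := MarkovChain.sum_pathWeight_mul_apply (initial p) (fun i u => sum_transition p i u) m
    a fun s => (if s.1 = x then 1 else 0) * (if s.2 = y then 1 else 0)
  rw [weight, this]
  simp [marginal_eq hnn hnsA hnsB, Fintype.sum_prod_type]

include hsum hfix in
theorem sum_weight_mul_detStrategy_zero (x y : Bool) :
    ∑ f, weight p m f * pathStrategy f 0 0 x y =
      p 0 0 x y := by
  have hX (f : Fin (m + 1) → Bool × Bool) : weight p m f * (if (f 0).1 = x then 1 else 0) =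
      weight p m f * (if false = x then 1 else 0) := by
    cases hf : (f 0).1
    · rfl
    · have h0 : initial p (f 0) = 0 := by
        rw [initial, hf]
        exact apply_zero_true_eq_zero hnn hsum hfix (.inr rfl) _
      rw [weight, MarkovChain.pathWeight_eq_zero_of_initial_eq_zero _ _ _ _ h0, zero_mul, zero_mul]
  have hY := MarkovChain.sum_pathWeight_mul_apply (initial p)
    (fun i u => sum_transition p i u) m (0 - 1)
    fun s => if s.2 = y then 1 else 0
  calc _ = (if false = x then 1 else 0) *
        ∑ f, weight p m f * (if (f (0 - 1)).2 = y then 1 else 0) := by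
        simp only [pathStrategy, detStrategy, ← mul_assoc, hX, mul_sum]
        exact sum_congr rfl fun _ _ => by ring
    _ = (if false = x then 1 else 0) * ∑ x', p 0 0 x' y := by
        rw [weight, hY, hnsB 0 y, Fintype.sum_prod_type]
        simp only [marginal_eq hnn hnsA hnsB, Fin.cast_val_eq_self, sub_add_cancel]
        simp
    _ = p 0 0 x y := by
        cases x <;> simp [apply_zero_true_eq_zero hnn hsum hfix (.inl rfl)]

theorem sum_weight_mul_detStrategy_succ (i : Fin m) (x y : Bool) :
    ∑ f, weight p m f *
        pathStrategy f i.succ i.succ x y =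
      p i.succ i.succ x y := by
  have hpred : i.succ - 1 = i.castSucc := (eq_sub_of_add_eq Fin.coeSucc_eq_succ).symm
  have := MarkovChain.sum_pathWeight_mul_apply_apply (initial p)
    (fun i u => sum_transition p i u) m i
    fun s t => (if t.1 = x then 1 else 0) * (if s.2 = y then 1 else 0)
  simp only [pathStrategy, detStrategy, hpred]
  rw [weight, this]
  simp only [marginal_eq hnn hnsA hnsB, Fin.coe_eq_castSucc]
  rw [sum_sum_mul_transition hnn hnsB i.castSucc
    fun x' y' => (if x' = x then 1 else 0) * (if y' = y then 1 else 0), Fin.coeSucc_eq_succ]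
  simp

include hsum hfix in
theorem sum_weight_mul_detStrategy {a b : Fin (m + 1)} (hab : b = a ∨ b = a + 1) (x y : Bool) :
    ∑ f, weight p m f * pathStrategy f a b x y =
      p a b x y := by
  rcases hab with rfl | rfl
  · rcases Fin.eq_zero_or_eq_succ b with rfl | ⟨i, rfl⟩
    · exact sum_weight_mul_detStrategy_zero hnn hsum hnsA hnsB hfix x y
    · exact sum_weight_mul_detStrategy_succ hnn hnsA hnsB i x y
  · exact sum_weight_mul_detStrategy_add_one hnn hnsA hnsB a x y

end Decomposition

end CHSH

theorem chshn_ns_convex_combination (n : ℕ) [NeZero n]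
    (p : Fin n → Fin n → Bool → Bool → ℝ)
    (hnn : ∀ a b x y, (b = a ∨ b = a + 1) → 0 ≤ p a b x y)
    (hsum : ∀ a b, (b = a ∨ b = a + 1) →
      ∑ x : Bool, ∑ y : Bool, p a b x y = 1)
    (hnsA : ∀ a x, ∑ y : Bool, p a a x y = ∑ y : Bool, p a (a + 1) x y)
    (hnsB : ∀ b y, ∑ x : Bool, p b b x y = ∑ x : Bool, p (b - 1) b x y)
    (hfix : ∀ b : Fin n, (b = 0 ∨ b = 0 + 1) → ∑ y : Bool, p 0 b false y = 1) :
    ∃ (m : ℕ) (w : Fin m → ℝ) (d : Fin m → Fin n → Fin n → Bool → Bool → ℝ),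
      (∀ i, 0 ≤ w i) ∧ (∑ i, w i = 1) ∧
      (∀ i, (∀ a b x y, (b = a ∨ b = a + 1) → 0 ≤ d i a b x y) ∧
        (∀ a b, (b = a ∨ b = a + 1) →
          ∑ x : Bool, ∑ y : Bool, d i a b x y = 1) ∧
        (∀ a x, ∑ y : Bool, d i a a x y = ∑ y : Bool, d i a (a + 1) x y) ∧
        (∀ b y, ∑ x : Bool, d i b b x y = ∑ x : Bool, d i (b - 1) b x y) ∧
        (∀ a, (∑ y : Bool, d i a a false y = 0) ∨ (∑ y : Bool, d i a a false y = 1)) ∧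
        (∀ b, (∑ x : Bool, d i b b x false = 0) ∨ (∑ x : Bool, d i b b x false = 1))) ∧
      (∀ a b x y, (b = a ∨ b = a + 1) →
        p a b x y = ∑ i, w i * d i a b x y) := by
  obtain ⟨m, rfl⟩ : ∃ m, n = m + 1 := Nat.exists_eq_succ_of_ne_zero (NeZero.ne n)
  let e := (Fintype.equivFin (Fin (m + 1) → Bool × Bool)).symm
  refine ⟨_, fun i => CHSH.weight p m (e i),
    fun i => CHSH.pathStrategy (e i),
    fun i => CHSH.weight_nonneg hnn m _, by rw [e.sum_comp]; exact CHSH.sum_weight hsum m,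
    fun i => ⟨fun a b x y _ => CHSH.detStrategy_nonneg _ _ a b x y,
      fun a b _ => CHSH.sum_sum_detStrategy _ _ a b, fun a x => ?_, fun b y => ?_, fun a => ?_,
      fun b => ?_⟩,
    fun a b x y hab => ?_⟩
  · simp only [CHSH.pathStrategy, CHSH.sum_detStrategy_right]
  · simp only [CHSH.pathStrategy, CHSH.sum_detStrategy_left]
  · simp only [CHSH.pathStrategy, CHSH.sum_detStrategy_right]; split_ifs <;> simp
  · simp only [CHSH.pathStrategy, CHSH.sum_detStrategy_left]; split_ifs <;> simp
  · rw [e.sum_comp fun f => CHSH.weight p m f * CHSH.pathStrategy f a b x y]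
    exact (CHSH.sum_weight_mul_detStrategy hnn hsum hnsA hnsB hfix hab x y).symm
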